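/- arXiv:2602.22947 — 6 statements merged into one kernel-verified Lean document; each statement's English description precedes it below -/
import Mathlib

section
/- Let q₁=(1,0,0), q₂=(1,1,0), q₃=(0,1,0), q₄=(0,1,1), q₅=(1,0,1), q₆=(0,0,1) in ℝ³. Then the intersection, over i = 1,…,6, of the convex cones generated by the five vectors {q_j : j ≠ i} equals the convex cone generated by {q₂, q₄, q₅} = {(1,1,0),(0,1,1),(1,0,1)}. (This is the moving cone Mov(Q) of Example 4.) -/
def coneGen (S : Set (Fin 3 → ℝ)) : Set (Fin 3 → ℝ) :=
  {x | ∃ (n : ℕ) (c : Fin n → ℝ) (v : Fin n → (Fin 3 → ℝ)),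
      (∀ i, 0 ≤ c i) ∧ (∀ i, v i ∈ S) ∧ x = ∑ i, c i • v i}

def q1 : Fin 3 → ℝ := ![1, 0, 0]
def q2 : Fin 3 → ℝ := ![1, 1, 0]
def q3 : Fin 3 → ℝ := ![0, 1, 0]
def q4 : Fin 3 → ℝ := ![0, 1, 1]
def q5 : Fin 3 → ℝ := ![1, 0, 1]
def q6 : Fin 3 → ℝ := ![0, 0, 1]

/-! Since q₂ = q₁ + q₃, q₄ = q₃ + q₆ and q₅ = q₁ + q₆, every cone on five of the six vectors
contains cone(q₂, q₄, q₅). Conversely, cone(q₂, q₄, q₅) is the intersection of the half-spaces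
`-x₀ + x₁ + x₂ ≥ 0`, `x₀ - x₁ + x₂ ≥ 0`, `x₀ + x₁ - x₂ ≥ 0`, and each of q₁, q₃, q₆ is the only
generator outside one of them, so the cone without it lies in that half-space. -/

open PointedCone Matrix

theorem coneGen_eq_hull (S : Set (Fin 3 → ℝ)) : coneGen S = hull ℝ S := by
  ext x
  constructor
  · rintro ⟨n, c, v, hc, hv, rfl⟩
    exact Submodule.mem_span_set'.2 ⟨n, fun i ↦ ⟨c i, hc i⟩, fun i ↦ ⟨v i, hv i⟩, rfl⟩
  · intro hx
    obtain ⟨n, c, v, rfl⟩ := Submodule.mem_span_set'.1 hx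
    exact ⟨n, fun i ↦ c i, fun i ↦ v i, fun i ↦ (c i).2, fun i ↦ (v i).2, rfl⟩

theorem hull_le_dual_singleton {R E F : Type*} [CommSemiring R] [PartialOrder R]
    [IsOrderedRing R] [AddCommMonoid E] [Module R E] [AddCommMonoid F] [Module R F]
    {p : E →ₗ[R] F →ₗ[R] R} {S : Set F} {a : E} (h : ∀ v ∈ S, 0 ≤ p a v) :
    hull R S ≤ dual p {a} :=
  Submodule.span_le.2 fun v hv ↦ by simpa using h v hv

theorem q2_eq_add : q2 = q1 + q3 := by ext i; fin_cases i <;> simp [q1, q2, q3]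
theorem q4_eq_add : q4 = q3 + q6 := by ext i; fin_cases i <;> simp [q3, q4, q6]
theorem q5_eq_add : q5 = q1 + q6 := by ext i; fin_cases i <;> simp [q1, q5, q6]

theorem hull_q2_q4_q5_le_hull {S : Set (Fin 3 → ℝ)} (h₂ : q2 ∈ S ∨ q1 ∈ S ∧ q3 ∈ S)
    (h₄ : q4 ∈ S ∨ q3 ∈ S ∧ q6 ∈ S) (h₅ : q5 ∈ S ∨ q1 ∈ S ∧ q6 ∈ S) :
    hull ℝ {q2, q4, q5} ≤ hull ℝ S := by
  have mem_hull {u v w} (huvw : u = v + w) : u ∈ S ∨ v ∈ S ∧ w ∈ S → u ∈ hull ℝ S := by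
    rintro (hu | ⟨hv, hw⟩)
    exacts [subset_hull hu, huvw ▸ add_mem (subset_hull hv) (subset_hull hw)]
  refine Submodule.span_le.2 ?_
  simpa [Set.insert_subset_iff] using
    ⟨mem_hull q2_eq_add h₂, mem_hull q4_eq_add h₄, mem_hull q5_eq_add h₅⟩

theorem hull_q2_q4_q5_eq_dual :
    hull ℝ {q2, q4, q5} = dual (dotProductBilin ℝ ℝ) {![-1, 1, 1], ![1, -1, 1], ![1, 1, -1]} := by
  apply le_antisymm
  · refine Submodule.span_le.2 ?_
    simp [Set.insert_subset_iff, q2, q4, q5, dotProduct, Fin.sum_univ_three]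
  · intro x hx
    obtain ⟨h₁, h₂, h₃⟩ : 0 ≤ -x 0 + x 1 + x 2 ∧ 0 ≤ x 0 - x 1 + x 2 ∧ 0 ≤ x 0 + x 1 - x 2 := by
      simpa [dotProduct, Fin.sum_univ_three, sub_eq_add_neg] using hx
    have hx : x = ((-x 0 + x 1 + x 2) / 2) • q4 + ((x 0 - x 1 + x 2) / 2) • q5
        + ((x 0 + x 1 - x 2) / 2) • q2 := by
      ext i; fin_cases i <;> simp [q2, q4, q5] <;> ring
    rw [hx]
    refine add_mem (add_mem ?_ ?_) ?_ <;> refine smul_mem _ ?_ (subset_hull (by simp)) <;> linarith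

theorem stmt2 :
    coneGen {q2, q3, q4, q5, q6} ∩ coneGen {q1, q3, q4, q5, q6} ∩
      coneGen {q1, q2, q4, q5, q6} ∩ coneGen {q1, q2, q3, q5, q6} ∩
      coneGen {q1, q2, q3, q4, q6} ∩ coneGen {q1, q2, q3, q4, q5} =
    coneGen {q2, q4, q5} := by
  simp only [coneGen_eq_hull, ← Submodule.coe_inf, SetLike.coe_set_eq]
  apply le_antisymm
  · rintro x ⟨⟨⟨⟨⟨h₁, -⟩, h₃⟩, -⟩, -⟩, h₆⟩
    rw [hull_q2_q4_q5_eq_dual, dual_insert, dual_insert]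
    refine ⟨hull_le_dual_singleton ?_ h₁, hull_le_dual_singleton ?_ h₃,
      hull_le_dual_singleton ?_ h₆⟩ <;>
    simp [q1, q2, q3, q4, q5, q6, dotProduct, Fin.sum_univ_three]
  · refine le_inf (le_inf (le_inf (le_inf (le_inf ?_ ?_) ?_) ?_) ?_) ?_ <;>
    exact hull_q2_q4_q5_le_hull (by simp) (by simp) (by simp)
end

section
/- Let v₁=(1,0,0), v₂=(0,1,0), v₃=(0,0,1), v₄=(0,-1,-1), v₅=(-1,-1,0), v₆=(1,2,1) in ℝ³. Then cone{v₁,v₂,v₄,v₆} ∪ cone{v₁,v₃,v₄,v₅} ∪ cone{v₂,v₃,v₅,v₆} ∪ cone{v₂,v₄,v₅} ∪ cone{v₁,v₃,v₆} = ℝ³. (The fan Σ spanned by the faces of the prism with vertices v₁,…,v₆ is complete.) -/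
def v1 : Fin 3 → ℝ := ![1, 0, 0]
def v2 : Fin 3 → ℝ := ![0, 1, 0]
def v3 : Fin 3 → ℝ := ![0, 0, 1]
def v4 : Fin 3 → ℝ := ![0, -1, -1]
def v5 : Fin 3 → ℝ := ![-1, -1, 0]
def v6 : Fin 3 → ℝ := ![1, 2, 1]

/-!
Write `x = a • v1 + b • v2 + c • v3`. Since `v5 = -v1 - v2`, the vectors `v1, v2, v5` positively
span the plane `c = 0`, and which of the cones over `{v1, v2}`, `{v2, v5}`, `{v1, v5}` contains the
projection of `x` is decided by which of `0, a, b` is smallest. Joining with `v3` covers the half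
space `c ≥ 0`; joining with `v4 = -v2 - v3` (project along `v4`, which replaces `b` by `b - c`)
covers `c ≤ 0`. The cone over `v1, v2, v3` is subdivided further by `v6 = v1 + 2 • v2 + v3`. Each
of the resulting eight simplicial cones lies in one of the five given cones.
-/

theorem le_and_le_or_le_and_le_or_le_and_le {α : Type*} [LinearOrder α] (a b c : α) :
    (a ≤ b ∧ a ≤ c) ∨ (b ≤ a ∧ b ≤ c) ∨ (c ≤ a ∧ c ≤ b) := by
  rcases le_total a b with hab | hba
  · rcases le_total a c with hac | hca
    · exact .inl ⟨hab, hac⟩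
    · exact .inr <| .inr ⟨hca, hca.trans hab⟩
  · rcases le_total b c with hbc | hcb
    · exact .inr <| .inl ⟨hba, hbc⟩
    · exact .inr <| .inr ⟨hcb.trans hba, hcb⟩

theorem mem_coneGen_of_eq {S : Set (Fin 3 → ℝ)} (u v w : Fin 3 → ℝ) {x : Fin 3 → ℝ}
    (p q r : ℝ) (hp : 0 ≤ p) (hq : 0 ≤ q) (hr : 0 ≤ r) (hx : x = p • u + q • v + r • w)
    (hu : u ∈ S := by simp) (hv : v ∈ S := by simp) (hw : w ∈ S := by simp) :
    x ∈ coneGen S := by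
  refine ⟨3, ![p, q, r], ![u, v, w], ?_, ?_, ?_⟩
  · intro i; fin_cases i <;> assumption
  · intro i; fin_cases i <;> assumption
  · simp [hx, Fin.sum_univ_three]

theorem exists_eq_smul_v1_add_smul_v2_add_smul_v3 (x : Fin 3 → ℝ) :
    ∃ a b c : ℝ, x = a • v1 + b • v2 + c • v3 :=
  ⟨x 0, x 1, x 2, by ext i; fin_cases i <;> simp [v1, v2, v3]⟩

theorem v4_eq : v4 = -v2 - v3 := by ext i; fin_cases i <;> simp [v2, v3, v4]

theorem v5_eq : v5 = -v1 - v2 := by ext i; fin_cases i <;> simp [v1, v2, v5]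

theorem v6_eq : v6 = v1 + (2 : ℝ) • v2 + v3 := by
  ext i; fin_cases i <;> norm_num [v1, v2, v3, v6]

-- `v6` has coordinates `(1, 2, 1)`, so the orthant splits by the smallest of `a, b / 2, c`.
theorem mem_coneGen_of_nonneg {a b c : ℝ} (ha : 0 ≤ a) (hb : 0 ≤ b) (hc : 0 ≤ c) :
    a • v1 + b • v2 + c • v3 ∈ coneGen {v1, v2, v4, v6} ∨
      a • v1 + b • v2 + c • v3 ∈ coneGen {v2, v3, v5, v6} ∨
      a • v1 + b • v2 + c • v3 ∈ coneGen {v1, v3, v6} := by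
  rcases le_and_le_or_le_and_le_or_le_and_le a (b / 2) c with
    ⟨hab, hac⟩ | ⟨hba, hbc⟩ | ⟨hca, hcb⟩
  · exact .inr <| .inl <| mem_coneGen_of_eq v2 v3 v6 (b - 2 * a) (c - a) a
      (by linarith) (by linarith) ha (by rw [v6_eq]; module)
  · exact .inr <| .inr <| mem_coneGen_of_eq v1 v3 v6 (a - b / 2) (c - b / 2) (b / 2)
      (by linarith) (by linarith) (by linarith) (by rw [v6_eq]; module)
  · exact .inl <| mem_coneGen_of_eq v1 v2 v6 (a - c) (b - 2 * c) c
      (by linarith) (by linarith) hc (by rw [v6_eq]; module)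

theorem stmt3 :
    coneGen {v1, v2, v4, v6} ∪ coneGen {v1, v3, v4, v5} ∪
      coneGen {v2, v3, v5, v6} ∪ coneGen {v2, v4, v5} ∪ coneGen {v1, v3, v6} =
    Set.univ := by
  refine Set.eq_univ_of_forall fun x => ?_
  obtain ⟨a, b, c, rfl⟩ := exists_eq_smul_v1_add_smul_v2_add_smul_v3 x
  simp only [Set.mem_union]
  rcases le_total 0 c with hc | hc
  · rcases le_and_le_or_le_and_le_or_le_and_le 0 a b with ⟨ha, hb⟩ | ⟨ha, hab⟩ | ⟨hb, hba⟩
    · rcases mem_coneGen_of_nonneg ha hb hc with h | h | h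
      exacts [.inl <| .inl <| .inl <| .inl h, .inl <| .inl <| .inr h, .inr h]
    · exact .inl <| .inl <| .inr <| mem_coneGen_of_eq v2 v3 v5 (b - a) c (-a)
        (by linarith) hc (by linarith) (by rw [v5_eq]; module)
    · exact .inl <| .inl <| .inl <| .inr <| mem_coneGen_of_eq v1 v3 v5 (a - b) c (-b)
        (by linarith) hc (by linarith) (by rw [v5_eq]; module)
  · rcases le_and_le_or_le_and_le_or_le_and_le 0 a (b - c) with
      ⟨ha, hb⟩ | ⟨ha, hab⟩ | ⟨hb, hba⟩
    · exact .inl <| .inl <| .inl <| .inl <| mem_coneGen_of_eq v1 v2 v4 a (b - c) (-c)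
        ha hb (by linarith) (by rw [v4_eq]; module)
    · exact .inl <| .inr <| mem_coneGen_of_eq v2 v4 v5 (b - c - a) (-c) (-a)
        (by linarith) (by linarith) (by linarith) (by rw [v4_eq, v5_eq]; module)
    · exact .inl <| .inl <| .inl <| .inr <|
        mem_coneGen_of_eq v1 v4 v5 (a - b + c) (-c) (c - b)
        (by linarith) (by linarith) (by linarith) (by rw [v4_eq, v5_eq]; module)
end

section
/- Let v₁=(1,0,0), v₂=(0,1,0), v₃=(0,0,1), v₄=(0,-1,-1), v₅=(-1,-1,0), v₆=(1,2,1) in ℝ³. Then the union of the eight cones cone{v₁,v₂,v₄}, cone{v₁,v₂,v₆}, cone{v₁,v₃,v₄}, cone{v₃,v₄,v₅}, cone{v₂,v₃,v₅}, cone{v₂,v₃,v₆}, cone{v₂,v₄,v₅}, cone{v₁,v₃,v₆} equals ℝ³. (The simplicial subdivision Σ₁ of Σ is a complete fan.) -/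
theorem mem_coneGen_of_eq_smul_add_smul_add_smul {S : Set (Fin 3 → ℝ)} {a b c x : Fin 3 → ℝ}
    {α β γ : ℝ} (ha : a ∈ S) (hb : b ∈ S) (hc : c ∈ S) (hα : 0 ≤ α) (hβ : 0 ≤ β) (hγ : 0 ≤ γ)
    (hx : x = α • a + β • b + γ • c) : x ∈ coneGen S := by
  refine ⟨3, ![α, β, γ], ![a, b, c], ?_, ?_, ?_⟩
  · intro i; fin_cases i <;> assumption
  · intro i; fin_cases i <;> assumption
  · simp [Fin.sum_univ_three, hx]

section Cones

variable {x : Fin 3 → ℝ}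

theorem mem_coneGen_v1_v2_v4 (h0 : 0 ≤ x 0) (h2 : x 2 ≤ 0) (h12 : x 2 ≤ x 1) :
    x ∈ coneGen {v1, v2, v4} :=
  mem_coneGen_of_eq_smul_add_smul_add_smul
    (a := v1) (b := v2) (c := v4) (α := x 0) (β := x 1 - x 2) (γ := -x 2)
    (by simp) (by simp) (by simp) h0 (by linarith) (by linarith)
    (by ext i; fin_cases i <;> simp [v1, v2, v4])

theorem mem_coneGen_v1_v2_v6 (h2 : 0 ≤ x 2) (h02 : x 2 ≤ x 0) (h12 : 2 * x 2 ≤ x 1) :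
    x ∈ coneGen {v1, v2, v6} :=
  mem_coneGen_of_eq_smul_add_smul_add_smul
    (a := v1) (b := v2) (c := v6) (α := x 0 - x 2) (β := x 1 - 2 * x 2) (γ := x 2)
    (by simp) (by simp) (by simp) (by linarith) (by linarith) h2
    (by ext i; fin_cases i <;> simp [v1, v2, v6]; ring)

theorem mem_coneGen_v1_v3_v4 (h0 : 0 ≤ x 0) (h1 : x 1 ≤ 0) (h12 : x 1 ≤ x 2) :
    x ∈ coneGen {v1, v3, v4} :=
  mem_coneGen_of_eq_smul_add_smul_add_smul
    (a := v1) (b := v3) (c := v4) (α := x 0) (β := x 2 - x 1) (γ := -x 1)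
    (by simp) (by simp) (by simp) h0 (by linarith) (by linarith)
    (by ext i; fin_cases i <;> simp [v1, v3, v4])

theorem mem_coneGen_v3_v4_v5 (h0 : x 0 ≤ 0) (h1 : x 1 ≤ x 0) (h2 : 0 ≤ x 0 - x 1 + x 2) :
    x ∈ coneGen {v3, v4, v5} :=
  mem_coneGen_of_eq_smul_add_smul_add_smul
    (a := v3) (b := v4) (c := v5) (α := x 0 - x 1 + x 2) (β := x 0 - x 1) (γ := -x 0)
    (by simp) (by simp) (by simp) h2 (by linarith) (by linarith)
    (by ext i; fin_cases i <;> simp [v3, v4, v5]; ring)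

theorem mem_coneGen_v2_v3_v5 (h0 : x 0 ≤ 0) (h1 : x 0 ≤ x 1) (h2 : 0 ≤ x 2) :
    x ∈ coneGen {v2, v3, v5} :=
  mem_coneGen_of_eq_smul_add_smul_add_smul
    (a := v2) (b := v3) (c := v5) (α := x 1 - x 0) (β := x 2) (γ := -x 0)
    (by simp) (by simp) (by simp) (by linarith) h2 (by linarith)
    (by ext i; fin_cases i <;> simp [v2, v3, v5])

theorem mem_coneGen_v2_v3_v6 (h0 : 0 ≤ x 0) (h1 : 2 * x 0 ≤ x 1) (h2 : x 0 ≤ x 2) :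
    x ∈ coneGen {v2, v3, v6} :=
  mem_coneGen_of_eq_smul_add_smul_add_smul
    (a := v2) (b := v3) (c := v6) (α := x 1 - 2 * x 0) (β := x 2 - x 0) (γ := x 0)
    (by simp) (by simp) (by simp) (by linarith) (by linarith) h0
    (by ext i; fin_cases i <;> simp [v2, v3, v6]; ring)

theorem mem_coneGen_v2_v4_v5 (h0 : x 0 ≤ 0) (h2 : x 2 ≤ 0) (h1 : x 0 + x 2 ≤ x 1) :
    x ∈ coneGen {v2, v4, v5} :=
  mem_coneGen_of_eq_smul_add_smul_add_smul
    (a := v2) (b := v4) (c := v5) (α := x 1 - x 2 - x 0) (β := -x 2) (γ := -x 0)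
    (by simp) (by simp) (by simp) (by linarith) (by linarith) (by linarith)
    (by ext i; fin_cases i <;> simp [v2, v4, v5]; ring)

theorem mem_coneGen_v1_v3_v6 (h1 : 0 ≤ x 1) (h0 : x 1 ≤ 2 * x 0) (h2 : x 1 ≤ 2 * x 2) :
    x ∈ coneGen {v1, v3, v6} :=
  mem_coneGen_of_eq_smul_add_smul_add_smul
    (a := v1) (b := v3) (c := v6) (α := x 0 - x 1 / 2) (β := x 2 - x 1 / 2)
    (γ := x 1 / 2) (by simp) (by simp) (by simp) (by linarith) (by linarith) (by linarith)
    (by ext i; fin_cases i <;> simp [v1, v3, v6])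

theorem mem_cones_of_nonneg (h0 : 0 ≤ x 0) :
    x ∈ coneGen {v1, v2, v4} ∨ x ∈ coneGen {v1, v2, v6} ∨ x ∈ coneGen {v1, v3, v4} ∨
      x ∈ coneGen {v2, v3, v6} ∨ x ∈ coneGen {v1, v3, v6} := by
  rcases le_total (x 1) 0 with h1 | h1
  · rcases le_total (x 1) (x 2) with h12 | h12
    · exact .inr <| .inr <| .inl <| mem_coneGen_v1_v3_v4 h0 h1 h12
    · exact .inl <| mem_coneGen_v1_v2_v4 h0 (by linarith) h12
  rcases le_total (x 2) 0 with h2 | h2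
  · exact .inl <| mem_coneGen_v1_v2_v4 h0 h2 (by linarith)
  rcases le_total (x 2) (x 0) with h20 | h02
  · rcases le_total (2 * x 2) (x 1) with h21 | h12
    · exact .inr <| .inl <| mem_coneGen_v1_v2_v6 h2 h20 h21
    · exact .inr <| .inr <| .inr <| .inr <| mem_coneGen_v1_v3_v6 h1 (by linarith) h12
  · rcases le_total (2 * x 0) (x 1) with h01 | h10
    · exact .inr <| .inr <| .inr <| .inl <| mem_coneGen_v2_v3_v6 h0 h01 h02
    · exact .inr <| .inr <| .inr <| .inr <| mem_coneGen_v1_v3_v6 h1 h10 (by linarith)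

theorem mem_cones_of_nonpos (h0 : x 0 ≤ 0) :
    x ∈ coneGen {v3, v4, v5} ∨ x ∈ coneGen {v2, v3, v5} ∨ x ∈ coneGen {v2, v4, v5} := by
  rcases le_total (x 0) (x 1) with h01 | h10
  · rcases le_total 0 (x 2) with h2 | h2
    · exact .inr <| .inl <| mem_coneGen_v2_v3_v5 h0 h01 h2
    · exact .inr <| .inr <| mem_coneGen_v2_v4_v5 h0 h2 (by linarith)
  · rcases le_total 0 (x 0 - x 1 + x 2) with h | h
    · exact .inl <| mem_coneGen_v3_v4_v5 h0 h10 h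
    · exact .inr <| .inr <| mem_coneGen_v2_v4_v5 h0 (by linarith) (by linarith)

end Cones

theorem stmt4 :
    coneGen {v1, v2, v4} ∪ coneGen {v1, v2, v6} ∪ coneGen {v1, v3, v4} ∪
      coneGen {v3, v4, v5} ∪ coneGen {v2, v3, v5} ∪ coneGen {v2, v3, v6} ∪
      coneGen {v2, v4, v5} ∪ coneGen {v1, v3, v6} =
    Set.univ := by
  refine Set.eq_univ_of_forall fun x => ?_
  simp only [Set.mem_union]
  rcases le_total 0 (x 0) with h0 | h0
  · have := mem_cones_of_nonneg h0; tauto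
  · have := mem_cones_of_nonpos h0; tauto
end

section
/- Let q₁=(1,0,0), q₂=(1,1,0), q₃=(0,1,0), q₄=(0,1,1), q₅=(1,0,1), q₆=(0,0,1) in ℝ³. Then the intersection of the eight cones cone{q₃,q₅,q₆}, cone{q₃,q₄,q₅}, cone{q₂,q₅,q₆}, cone{q₁,q₂,q₆}, cone{q₁,q₄,q₆}, cone{q₁,q₄,q₅}, cone{q₁,q₃,q₆}, cone{q₂,q₄,q₅} equals the convex cone generated by {(1,0,1),(1,1,2),(1,1,1)}. (This intersection is the pullback of the nef cone of the projective small resolution X₁, a full-dimensional chamber of the secondary fan.) -/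
lemma coneGen_dual {S : Set (Fin 3 → ℝ)} {x : Fin 3 → ℝ} (hx : x ∈ coneGen S)
    (l : Fin 3 → ℝ) (hS : ∀ v ∈ S, 0 ≤ ∑ j, l j * v j) : 0 ≤ ∑ j, l j * x j := by
  obtain ⟨n, c, v, hc, hv, rfl⟩ := hx
  have h : ∑ j, l j * (∑ i, c i • v i) j = ∑ i, c i * ∑ j, l j * v i j := by
    simp only [Finset.sum_apply, Pi.smul_apply, smul_eq_mul, Finset.mul_sum]
    rw [Finset.sum_comm]
    apply Finset.sum_congr rfl; intro i _
    apply Finset.sum_congr rfl; intro j _; ring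
  rw [h]
  exact Finset.sum_nonneg fun i _ => mul_nonneg (hc i) (hS _ (hv i))

lemma mem_coneGen3 {a b c x : Fin 3 → ℝ} {α β γ : ℝ}
    (hα : 0 ≤ α) (hβ : 0 ≤ β) (hγ : 0 ≤ γ)
    (hx : x = α • a + β • b + γ • c) :
    x ∈ coneGen {a, b, c} := by
  refine ⟨3, ![α, β, γ], ![a, b, c], ?_, ?_, ?_⟩
  · intro i; fin_cases i <;> assumption
  · intro i; fin_cases i <;> simp
  · rw [hx]; simp [Fin.sum_univ_three]

theorem stmt12 :
    coneGen {q3, q5, q6} ∩ coneGen {q3, q4, q5} ∩ coneGen {q2, q5, q6} ∩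
      coneGen {q1, q2, q6} ∩ coneGen {q1, q4, q6} ∩ coneGen {q1, q4, q5} ∩
      coneGen {q1, q3, q6} ∩ coneGen {q2, q4, q5} =
    coneGen {![1, 0, 1], ![1, 1, 2], ![1, 1, 1]} := by
  ext x
  constructor
  · rintro ⟨⟨⟨⟨⟨⟨⟨h1, h2⟩, h3⟩, h4⟩, h5⟩, h6⟩, h7⟩, h8⟩
    -- A = x0 - x1 ≥ 0 from cone{q2,q5,q6}
    have hA := coneGen_dual h3 ![1, -1, 0] (by
      rintro v (rfl | rfl | rfl) <;> simp [q2, q5, q6, Fin.sum_univ_three])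
    -- B = x2 - x0 ≥ 0 from cone{q3,q4,q5}
    have hB := coneGen_dual h2 ![-1, 0, 1] (by
      rintro v (rfl | rfl | rfl) <;> simp [q3, q4, q5, Fin.sum_univ_three])
    -- C = x0 + x1 - x2 ≥ 0 from cone{q1,q4,q5}
    have hC := coneGen_dual h6 ![1, 1, -1] (by
      rintro v (rfl | rfl | rfl) <;> simp [q1, q4, q5, Fin.sum_univ_three])
    simp only [Fin.sum_univ_three, Matrix.cons_val_zero, Matrix.cons_val_one,
      Matrix.head_cons, Matrix.cons_val_two, Matrix.tail_cons] at hA hB hC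
    refine mem_coneGen3 (α := x 0 - x 1) (β := x 2 - x 0) (γ := x 0 + x 1 - x 2)
      (by linarith) (by linarith) (by linarith) ?_
    funext i; fin_cases i <;> simp <;> ring
  · intro hx
    have hA := coneGen_dual hx ![1, -1, 0] (by
      rintro v (rfl | rfl | rfl) <;> simp [Fin.sum_univ_three] <;> norm_num)
    have hB := coneGen_dual hx ![-1, 0, 1] (by
      rintro v (rfl | rfl | rfl) <;> simp [Fin.sum_univ_three] <;> norm_num)
    have hC := coneGen_dual hx ![1, 1, -1] (by
      rintro v (rfl | rfl | rfl) <;> simp [Fin.sum_univ_three] <;> norm_num)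
    simp only [Fin.sum_univ_three, Matrix.cons_val_zero, Matrix.cons_val_one,
      Matrix.head_cons, Matrix.cons_val_two, Matrix.tail_cons] at hA hB hC
    refine ⟨⟨⟨⟨⟨⟨⟨?_, ?_⟩, ?_⟩, ?_⟩, ?_⟩, ?_⟩, ?_⟩, ?_⟩
    · -- {q3,q5,q6}: α = x1, β = x0, γ = x2 - x0
      exact mem_coneGen3 (α := x 1) (β := x 0) (γ := x 2 - x 0)
        (by linarith) (by linarith) (by linarith)
        (by funext i; fin_cases i <;> simp [q3, q5, q6] <;> ring)
    · -- {q3,q4,q5}: α = x0 + x1 - x2, β = x2 - x0, γ = x0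
      exact mem_coneGen3 (α := x 0 + x 1 - x 2) (β := x 2 - x 0) (γ := x 0)
        (by linarith) (by linarith) (by linarith)
        (by funext i; fin_cases i <;> simp [q3, q4, q5] <;> ring)
    · -- {q2,q5,q6}: α = x1, β = x0 - x1, γ = x2 - x0 + x1
      exact mem_coneGen3 (α := x 1) (β := x 0 - x 1) (γ := x 2 - x 0 + x 1)
        (by linarith) (by linarith) (by linarith)
        (by funext i; fin_cases i <;> simp [q2, q5, q6] <;> ring)
    · -- {q1,q2,q6}: α = x0 - x1, β = x1, γ = x2
      exact mem_coneGen3 (α := x 0 - x 1) (β := x 1) (γ := x 2)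
        (by linarith) (by linarith) (by linarith)
        (by funext i; fin_cases i <;> simp [q1, q2, q6] <;> ring)
    · -- {q1,q4,q6}: α = x0, β = x1, γ = x2 - x1
      exact mem_coneGen3 (α := x 0) (β := x 1) (γ := x 2 - x 1)
        (by linarith) (by linarith) (by linarith)
        (by funext i; fin_cases i <;> simp [q1, q4, q6] <;> ring)
    · -- {q1,q4,q5}: α = x0 + x1 - x2, β = x1, γ = x2 - x1
      exact mem_coneGen3 (α := x 0 + x 1 - x 2) (β := x 1) (γ := x 2 - x 1)
        (by linarith) (by linarith) (by linarith)
        (by funext i; fin_cases i <;> simp [q1, q4, q5] <;> ring)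
    · -- {q1,q3,q6}: α = x0, β = x1, γ = x2
      exact mem_coneGen3 (α := x 0) (β := x 1) (γ := x 2)
        (by linarith) (by linarith) (by linarith)
        (by funext i; fin_cases i <;> simp [q1, q3, q6] <;> ring)
    · -- {q2,q4,q5}: α = (x0+x1-x2)/2, β = (x1+x2-x0)/2, γ = (x0+x2-x1)/2
      exact mem_coneGen3 (α := (x 0 + x 1 - x 2) / 2) (β := (x 1 + x 2 - x 0) / 2)
        (γ := (x 0 + x 2 - x 1) / 2)
        (by linarith) (by linarith) (by linarith)
        (by funext i; fin_cases i <;> simp [q2, q4, q5] <;> ring)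
end

section
/- Let q₁=(1,0,0), q₂=(1,1,0), q₃=(0,1,0), q₄=(0,1,1), q₅=(1,0,1), q₆=(0,0,1) in ℝ³. Then the intersection of the eight cones cone{q₃,q₅,q₆}, cone{q₃,q₄,q₅}, cone{q₂,q₅,q₆}, cone{q₁,q₂,q₆}, cone{q₁,q₃,q₄}, cone{q₁,q₂,q₄}, cone{q₁,q₃,q₆}, cone{q₂,q₄,q₅} equals the ray {t·(1,1,1) : t ∈ ℝ, t ≥ 0}. (This intersection is the nef cone of the non-projective ℚ-factorial small resolution X₇; it is not full-dimensional.) -/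
/-!
The three cones `cone{q₃,q₅,q₆}`, `cone{q₂,q₅,q₆}` and `cone{q₁,q₃,q₄}` lie in the half-spaces
`x₀ ≤ x₂`, `x₁ ≤ x₀` and `x₂ ≤ x₁` respectively, so on the intersection all coordinates agree,
and `cone{q₃,q₅,q₆}` also forces `x₀ ≥ 0`. Conversely `(1,1,1)` lies in every one of the eight
cones: it equals `q₃ + q₅`, `q₂ + q₆`, `q₁ + q₄`, `q₁ + q₃ + q₆` or `½ (q₂ + q₄ + q₅)`.
-/

namespace coneGen

variable {S : Set (Fin 3 → ℝ)} {u v x : Fin 3 → ℝ}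

theorem eq_hull (S : Set (Fin 3 → ℝ)) : coneGen S = PointedCone.hull ℝ S := by
  ext x
  rw [SetLike.mem_coe, Submodule.mem_span_set']
  constructor
  · rintro ⟨n, c, v, hc, hv, rfl⟩
    exact ⟨n, fun i => ⟨c i, hc i⟩, fun i => ⟨v i, hv i⟩, rfl⟩
  · rintro ⟨n, c, v, rfl⟩
    exact ⟨n, (c ·), (v ·), fun i => (c i).2, fun i => (v i).2, rfl⟩

theorem mem_of_mem (hv : v ∈ S) : v ∈ coneGen S := by
  rw [eq_hull]; exact PointedCone.subset_hull hv

theorem add_mem (hu : u ∈ coneGen S) (hv : v ∈ coneGen S) : u + v ∈ coneGen S := by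
  rw [eq_hull] at *; exact Submodule.add_mem _ hu hv

theorem add_mem_of_mem (hu : u ∈ S) (hv : v ∈ S) : u + v ∈ coneGen S :=
  add_mem (mem_of_mem hu) (mem_of_mem hv)

theorem smul_mem (hv : v ∈ coneGen S) {t : ℝ} (ht : 0 ≤ t) : t • v ∈ coneGen S := by
  rw [eq_hull] at *; exact Submodule.smul_mem _ ⟨t, ht⟩ hv

theorem nonneg_of_mem (f : (Fin 3 → ℝ) →ₗ[ℝ] ℝ) (hS : ∀ v ∈ S, 0 ≤ f v)
    (hx : x ∈ coneGen S) : 0 ≤ f x := by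
  rw [eq_hull] at hx
  have : PointedCone.hull ℝ S ≤ (PointedCone.positive ℝ ℝ).comap f := Submodule.span_le.2 hS
  exact this hx

theorem apply_nonneg_of_mem {i : Fin 3} (hS : ∀ v ∈ S, 0 ≤ v i) (hx : x ∈ coneGen S) :
    0 ≤ x i :=
  nonneg_of_mem (LinearMap.proj i) hS hx

theorem apply_le_apply_of_mem {i j : Fin 3} (hS : ∀ v ∈ S, v i ≤ v j) (hx : x ∈ coneGen S) :
    x i ≤ x j := by
  have hx' := nonneg_of_mem (LinearMap.proj (R := ℝ) (φ := fun _ => ℝ) j - LinearMap.proj i)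
    (fun v hv => by simpa using hS v hv) hx
  simpa using hx'

theorem ray_subset (hv : v ∈ coneGen S) : {x | ∃ t : ℝ, 0 ≤ t ∧ x = t • v} ⊆ coneGen S := by
  rintro _ ⟨t, ht, rfl⟩
  exact smul_mem hv ht

end coneGen

theorem q3_add_q5 : q3 + q5 = ![1, 1, 1] := by ext i; fin_cases i <;> simp [q3, q5]

theorem q2_add_q6 : q2 + q6 = ![1, 1, 1] := by ext i; fin_cases i <;> simp [q2, q6]

theorem q1_add_q4 : q1 + q4 = ![1, 1, 1] := by ext i; fin_cases i <;> simp [q1, q4]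

theorem q1_add_q3_add_q6 : q1 + q3 + q6 = ![1, 1, 1] := by
  ext i; fin_cases i <;> simp [q1, q3, q6]

theorem q2_add_q4_add_q5 : q2 + q4 + q5 = (2 : ℝ) • ![1, 1, 1] := by
  ext i; fin_cases i <;> norm_num [q2, q4, q5]

theorem eq_smul_ones_of_mem_coneGen {x : Fin 3 → ℝ} (h356 : x ∈ coneGen {q3, q5, q6})
    (h256 : x ∈ coneGen {q2, q5, q6}) (h134 : x ∈ coneGen {q1, q3, q4}) :
    ∃ t : ℝ, 0 ≤ t ∧ x = t • ![1, 1, 1] := by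
  have h0 : 0 ≤ x 0 := coneGen.apply_nonneg_of_mem (by simp [q3, q5, q6]) h356
  have h02 : x 0 ≤ x 2 := coneGen.apply_le_apply_of_mem (by simp [q3, q5, q6]) h356
  have h10 : x 1 ≤ x 0 := coneGen.apply_le_apply_of_mem (by simp [q2, q5, q6]) h256
  have h21 : x 2 ≤ x 1 := coneGen.apply_le_apply_of_mem (by simp [q1, q3, q4]) h134
  refine ⟨x 0, h0, ?_⟩
  ext i; fin_cases i <;> simp <;> linarith

theorem stmt13 :
    coneGen {q3, q5, q6} ∩ coneGen {q3, q4, q5} ∩ coneGen {q2, q5, q6} ∩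
      coneGen {q1, q2, q6} ∩ coneGen {q1, q3, q4} ∩ coneGen {q1, q2, q4} ∩
      coneGen {q1, q3, q6} ∩ coneGen {q2, q4, q5} =
    {x : Fin 3 → ℝ | ∃ t : ℝ, 0 ≤ t ∧ x = t • ![1, 1, 1]} := by
  apply Set.Subset.antisymm
  · rintro x ⟨⟨⟨⟨⟨⟨⟨h356, -⟩, h256⟩, -⟩, h134⟩, -⟩, -⟩, -⟩
    exact eq_smul_ones_of_mem_coneGen h356 h256 h134
  · simp only [Set.subset_inter_iff]
    refine ⟨⟨⟨⟨⟨⟨⟨?_, ?_⟩, ?_⟩, ?_⟩, ?_⟩, ?_⟩, ?_⟩, ?_⟩ <;> apply coneGen.ray_subset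
    · exact q3_add_q5 ▸ coneGen.add_mem_of_mem (by simp) (by simp)
    · exact q3_add_q5 ▸ coneGen.add_mem_of_mem (by simp) (by simp)
    · exact q2_add_q6 ▸ coneGen.add_mem_of_mem (by simp) (by simp)
    · exact q2_add_q6 ▸ coneGen.add_mem_of_mem (by simp) (by simp)
    · exact q1_add_q4 ▸ coneGen.add_mem_of_mem (by simp) (by simp)
    · exact q1_add_q4 ▸ coneGen.add_mem_of_mem (by simp) (by simp)
    · exact q1_add_q3_add_q6 ▸
        coneGen.add_mem (coneGen.add_mem_of_mem (by simp) (by simp)) (coneGen.mem_of_mem (by simp))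
    · have h245 : (2 : ℝ) • ![1, 1, 1] ∈ coneGen {q2, q4, q5} := q2_add_q4_add_q5 ▸
        coneGen.add_mem (coneGen.add_mem_of_mem (by simp) (by simp)) (coneGen.mem_of_mem (by simp))
      simpa using coneGen.smul_mem h245 (inv_nonneg.2 zero_le_two)
end

section
/- Let q₁=(1,0,0), q₂=(1,1,0), q₃=(0,1,0), q₄=(0,1,1), q₅=(1,0,1), q₆=(0,0,1) in ℝ³. Then the intersection of the eight cones cone{q₂,q₃,q₅}, cone{q₁,q₃,q₅}, cone{q₂,q₃,q₆}, cone{q₂,q₄,q₆}, cone{q₁,q₄,q₆}, cone{q₁,q₄,q₅}, cone{q₁,q₃,q₆}, cone{q₂,q₄,q₅} equals the ray {t·(1,1,1) : t ∈ ℝ, t ≥ 0}. (This intersection is the nef cone of the non-projective ℚ-factorial small resolution X₈; it is not full-dimensional.) -/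
open PointedCone Matrix

theorem dotProduct_nonneg_of_mem_coneGen {S : Set (Fin 3 → ℝ)} {w x : Fin 3 → ℝ}
    (hS : ∀ v ∈ S, 0 ≤ v ⬝ᵥ w) (hx : x ∈ coneGen S) : 0 ≤ x ⬝ᵥ w := by
  have hw : w ∈ dual (dotProductBilin ℝ ℝ) (hull ℝ S) := by
    rw [dual_hull]
    exact hS
  rw [coneGen_eq_hull] at hx
  exact hw hx

theorem exists_nonneg_smul_of_mem_coneGen {x : Fin 3 → ℝ} (h235 : x ∈ coneGen {q2, q3, q5})
    (h236 : x ∈ coneGen {q2, q3, q6}) (h146 : x ∈ coneGen {q1, q4, q6})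
    (h136 : x ∈ coneGen {q1, q3, q6}) : ∃ t : ℝ, 0 ≤ t ∧ x = t • ![1, 1, 1] := by
  have h20 := dotProduct_nonneg_of_mem_coneGen (w := ![1, 0, -1])
    (by simp [q2, q3, q5, dotProduct, Fin.sum_univ_three]) h235
  have h01 := dotProduct_nonneg_of_mem_coneGen (w := ![-1, 1, 0])
    (by simp [q2, q3, q6, dotProduct, Fin.sum_univ_three]) h236
  have h12 := dotProduct_nonneg_of_mem_coneGen (w := ![0, -1, 1])
    (by simp [q1, q4, q6, dotProduct, Fin.sum_univ_three]) h146
  have h1 := dotProduct_nonneg_of_mem_coneGen (w := ![0, 1, 0])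
    (by simp [q1, q3, q6, dotProduct, Fin.sum_univ_three]) h136
  simp only [dotProduct, Fin.sum_univ_three, cons_val_zero, cons_val_one, cons_val]
    at h20 h01 h12 h1
  refine ⟨x 0, by linarith, ?_⟩
  ext j
  fin_cases j <;> simp <;> linarith

theorem stmt14 :
    coneGen {q2, q3, q5} ∩ coneGen {q1, q3, q5} ∩ coneGen {q2, q3, q6} ∩
      coneGen {q2, q4, q6} ∩ coneGen {q1, q4, q6} ∩ coneGen {q1, q4, q5} ∩
      coneGen {q1, q3, q6} ∩ coneGen {q2, q4, q5} =
    {x : Fin 3 → ℝ | ∃ t : ℝ, 0 ≤ t ∧ x = t • ![1, 1, 1]} := by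
  ext x
  constructor
  · rintro ⟨⟨⟨⟨⟨⟨⟨h235, -⟩, h236⟩, -⟩, h146⟩, -⟩, h136⟩, -⟩
    exact exists_nonneg_smul_of_mem_coneGen h235 h236 h146 h136
  · rintro ⟨t, ht, rfl⟩
    have h35 : q3 + q5 = ![1, 1, 1] := by ext j; fin_cases j <;> simp [q3, q5]
    have h26 : q2 + q6 = ![1, 1, 1] := by ext j; fin_cases j <;> simp [q2, q6]
    have h14 : q1 + q4 = ![1, 1, 1] := by ext j; fin_cases j <;> simp [q1, q4]
    have h136 : q1 + q3 + q6 = ![1, 1, 1] := by ext j; fin_cases j <;> simp [q1, q3, q6]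
    have h245 : (2⁻¹ : ℝ) • (q2 + q4 + q5) = ![1, 1, 1] := by
      ext j; fin_cases j <;> norm_num [q2, q4, q5]
    simp only [coneGen_eq_hull, Set.mem_inter_iff, SetLike.mem_coe]
    refine ⟨⟨⟨⟨⟨⟨⟨?_, ?_⟩, ?_⟩, ?_⟩, ?_⟩, ?_⟩, ?_⟩, ?_⟩ <;> refine (hull ℝ _).smul_mem ht ?_
    · rw [← h35]; apply add_mem <;> exact subset_hull (by simp)
    · rw [← h35]; apply add_mem <;> exact subset_hull (by simp)
    · rw [← h26]; apply add_mem <;> exact subset_hull (by simp)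
    · rw [← h26]; apply add_mem <;> exact subset_hull (by simp)
    · rw [← h14]; apply add_mem <;> exact subset_hull (by simp)
    · rw [← h14]; apply add_mem <;> exact subset_hull (by simp)
    · rw [← h136]; repeat' apply add_mem
      all_goals exact subset_hull (by simp)
    · rw [← h245]; refine (hull ℝ _).smul_mem (by norm_num) ?_
      repeat' apply add_mem
      all_goals exact subset_hull (by simp)
end
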